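/- Let 0 < p < 1 and α, β₁, β₂, β₃ > 0. Let V₁, V₂, V₃ be independent ℕ-valued random variables with P(Vᵢ ≤ x) = (1 − p^{(x+1)^α})^{βᵢ} for all x ∈ ℕ, and set X₁ = max{V₁, V₃}, X₂ = max{V₂, V₃}. Then the joint reliability (survival) function S(x₁, x₂) = P(X₁ > x₁, X₂ > x₂) satisfies: (i) if x₁ < x₂, S(x₁, x₂) = 1 − (1 − p^{(x₂+1)^α})^{β₂+β₃} − (1 − p^{(x₁+1)^α})^{β₁+β₃} · (1 − (1 − p^{(x₂+1)^α})^{β₂}); (ii) if x₂ < x₁, S(x₁, x₂) = 1 − (1 − p^{(x₁+1)^α})^{β₁+β₃} − (1 − p^{(x₂+1)^α})^{β₂+β₃} · (1 − (1 − p^{(x₁+1)^α})^{β₁}); (iii) if x₁ = x₂ = x, S(x, x) = 1 − (1 − p^{(x+1)^α})^{β₃} · [(1 − p^{(x+1)^α})^{β₁} + (1 − p^{(x+1)^α})^{β₂} − (1 − p^{(x+1)^α})^{β₁+β₂}]. -/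

import Mathlib

/-!
The event `{X₁ > x₁, X₂ > x₂}` is the complement of `{V₁ ≤ x₁, V₃ ≤ x₁} ∪ {V₂ ≤ x₂, V₃ ≤ x₂}`,
and the intersection of these two events is `{V₁ ≤ x₁, V₂ ≤ x₂, V₃ ≤ min x₁ x₂}`.
Inclusion–exclusion and independence therefore express the survival function through the three
marginal CDFs, and the identity `F(x; β) F(x; γ) = F(x; β + γ)` for EDW CDFs brings it into the
stated form.
-/

open MeasureTheory ProbabilityTheory

/-- The CDF of the exponentiated discrete Weibull distribution `EDW(α, p, β)`:
`F_EDW(x; α, p, β) = (1 - p^((x+1)^α))^β`. -/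
noncomputable def edwCDF (α p β : ℝ) (x : ℕ) : ℝ :=
  (1 - p ^ (((x : ℝ) + 1) ^ α)) ^ β

/-- The PMF of the exponentiated discrete Weibull distribution `EDW(α, p, β)`:
`f_EDW(x; α, p, β) = (1 - p^((x+1)^α))^β - (1 - p^(x^α))^β`. -/
noncomputable def edwPMF (α p β : ℝ) (x : ℕ) : ℝ :=
  (1 - p ^ (((x : ℝ) + 1) ^ α)) ^ β - (1 - p ^ ((x : ℝ) ^ α)) ^ β

open Set

lemma edwCDF_add {α p : ℝ} (hp0 : 0 ≤ p) (hp1 : p < 1) (β γ : ℝ) (x : ℕ) :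
    edwCDF α p (β + γ) x = edwCDF α p β x * edwCDF α p γ x := by
  have hpos : 0 < 1 - p ^ (((x : ℝ) + 1) ^ α) :=
    sub_pos.2 (Real.rpow_lt_one hp0 hp1 (by positivity))
  exact Real.rpow_add hpos β γ

section Survival

variable {Ω ι : Type*} [MeasurableSpace Ω] {μ : Measure Ω}

lemma probReal_compl_union [IsProbabilityMeasure μ] {s t : Set Ω} (hs : MeasurableSet s)
    (ht : MeasurableSet t) :
    μ.real (s ∪ t)ᶜ = 1 - μ.real s - μ.real t + μ.real (s ∩ t) := by
  rw [probReal_compl_eq_one_sub (hs.union ht)]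
  linarith [measureReal_union_add_inter (μ := μ) (s := s) ht]

variable [MeasurableSpace ι] {V₁ V₂ V₃ : Ω → ι}

lemma ProbabilityTheory.iIndepFun.measureReal_preimage_inter_inter
    (hindep : iIndepFun ![V₁, V₂, V₃] μ) {A B C : Set ι} (hA : MeasurableSet A) (hB : MeasurableSet B) (hC : MeasurableSet C) :
    μ.real (V₁ ⁻¹' A ∩ V₂ ⁻¹' B ∩ V₃ ⁻¹' C) =
      μ.real (V₁ ⁻¹' A) * μ.real (V₂ ⁻¹' B) * μ.real (V₃ ⁻¹' C) := by
  have h := hindep.meas_iInter (s := ![V₁ ⁻¹' A, V₂ ⁻¹' B, V₃ ⁻¹' C]) fun i ↦ by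
    fin_cases i
    exacts [⟨A, hA, rfl⟩, ⟨B, hB, rfl⟩, ⟨C, hC, rfl⟩]
  have hinter : ⋂ i, ![V₁ ⁻¹' A, V₂ ⁻¹' B, V₃ ⁻¹' C] i = V₁ ⁻¹' A ∩ V₂ ⁻¹' B ∩ V₃ ⁻¹' C := by
    ext ω
    simp [Fin.forall_fin_succ, and_assoc]
  rw [hinter, Fin.prod_univ_three] at h
  simp [measureReal_def, h]

variable [LinearOrder ι] [TopologicalSpace ι] [ClosedIicTopology ι] [OpensMeasurableSpace ι]

lemma measureReal_lt_max_and_lt_max [IsProbabilityMeasure μ] (hm₁ : Measurable V₁)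
    (hm₂ : Measurable V₂) (hm₃ : Measurable V₃) (hindep : iIndepFun ![V₁, V₂, V₃] μ) (x₁ x₂ : ι) :
    μ.real {ω | x₁ < max (V₁ ω) (V₃ ω) ∧ x₂ < max (V₂ ω) (V₃ ω)} =
      1 - μ.real {ω | V₁ ω ≤ x₁} * μ.real {ω | V₃ ω ≤ x₁}
        - μ.real {ω | V₂ ω ≤ x₂} * μ.real {ω | V₃ ω ≤ x₂}
        + μ.real {ω | V₁ ω ≤ x₁} * μ.real {ω | V₂ ω ≤ x₂} * μ.real {ω | V₃ ω ≤ min x₁ x₂} := by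
  -- pairwise independence is the case of a trivial middle event
  have h₁₃ := hindep.measureReal_preimage_inter_inter (measurableSet_Iic (a := x₁))
    MeasurableSet.univ (measurableSet_Iic (a := x₁))
  have h₂₃ := hindep.measureReal_preimage_inter_inter MeasurableSet.univ
    (measurableSet_Iic (a := x₂)) (measurableSet_Iic (a := x₂))
  have h₁₂₃ := hindep.measureReal_preimage_inter_inter (measurableSet_Iic (a := x₁))
    (measurableSet_Iic (a := x₂)) (measurableSet_Iic (a := min x₁ x₂))
  simp only [preimage_univ, inter_univ, univ_inter, probReal_univ, mul_one, one_mul] at h₁₃ h₂₃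
  have hsurv : {ω | x₁ < max (V₁ ω) (V₃ ω) ∧ x₂ < max (V₂ ω) (V₃ ω)} =
      (V₁ ⁻¹' Iic x₁ ∩ V₃ ⁻¹' Iic x₁ ∪ V₂ ⁻¹' Iic x₂ ∩ V₃ ⁻¹' Iic x₂)ᶜ := by
    ext ω
    simp only [mem_ofPred_eq, mem_compl_iff, mem_union, mem_inter_iff, mem_preimage, mem_Iic,
      not_or, not_and_or, not_le, lt_max_iff]
  have hboth : V₁ ⁻¹' Iic x₁ ∩ V₃ ⁻¹' Iic x₁ ∩ (V₂ ⁻¹' Iic x₂ ∩ V₃ ⁻¹' Iic x₂) =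
      V₁ ⁻¹' Iic x₁ ∩ V₂ ⁻¹' Iic x₂ ∩ V₃ ⁻¹' Iic (min x₁ x₂) := by
    ext ω
    simp only [mem_inter_iff, mem_preimage, mem_Iic, le_min_iff]
    tauto
  rw [hsurv, probReal_compl_union ((hm₁ measurableSet_Iic).inter (hm₃ measurableSet_Iic))
    ((hm₂ measurableSet_Iic).inter (hm₃ measurableSet_Iic)), hboth, h₁₃, h₂₃, h₁₂₃]
  rfl

end Survival

theorem bdew_joint_reliability_general
    {Ω : Type*} [MeasurableSpace Ω] (μ : Measure Ω) [IsProbabilityMeasure μ]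
    (α p β₁ β₂ β₃ : ℝ)
    (hp0 : 0 < p) (hp1 : p < 1)
    (V₁ V₂ V₃ : Ω → ℕ)
    (hm₁ : Measurable V₁) (hm₂ : Measurable V₂) (hm₃ : Measurable V₃)
    (hindep : iIndepFun ![V₁, V₂, V₃] μ)
    (hcdf₁ : ∀ x : ℕ, (μ {ω | V₁ ω ≤ x}).toReal = edwCDF α p β₁ x)
    (hcdf₂ : ∀ x : ℕ, (μ {ω | V₂ ω ≤ x}).toReal = edwCDF α p β₂ x)
    (hcdf₃ : ∀ x : ℕ, (μ {ω | V₃ ω ≤ x}).toReal = edwCDF α p β₃ x) :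
    ∀ x₁ x₂ : ℕ,
      (x₁ < x₂ →
        (μ {ω | x₁ < max (V₁ ω) (V₃ ω) ∧ x₂ < max (V₂ ω) (V₃ ω)}).toReal =
          1 - (1 - p ^ (((x₂ : ℝ) + 1) ^ α)) ^ (β₂ + β₃) -
            (1 - p ^ (((x₁ : ℝ) + 1) ^ α)) ^ (β₁ + β₃) *
              (1 - (1 - p ^ (((x₂ : ℝ) + 1) ^ α)) ^ β₂)) ∧
      (x₂ < x₁ →
        (μ {ω | x₁ < max (V₁ ω) (V₃ ω) ∧ x₂ < max (V₂ ω) (V₃ ω)}).toReal =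
          1 - (1 - p ^ (((x₁ : ℝ) + 1) ^ α)) ^ (β₁ + β₃) -
            (1 - p ^ (((x₂ : ℝ) + 1) ^ α)) ^ (β₂ + β₃) *
              (1 - (1 - p ^ (((x₁ : ℝ) + 1) ^ α)) ^ β₁)) ∧
      (x₁ = x₂ →
        (μ {ω | x₁ < max (V₁ ω) (V₃ ω) ∧ x₂ < max (V₂ ω) (V₃ ω)}).toReal =
          1 - (1 - p ^ (((x₁ : ℝ) + 1) ^ α)) ^ β₃ *
            ((1 - p ^ (((x₁ : ℝ) + 1) ^ α)) ^ β₁ + (1 - p ^ (((x₁ : ℝ) + 1) ^ α)) ^ β₂ -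
              (1 - p ^ (((x₁ : ℝ) + 1) ^ α)) ^ (β₁ + β₂))) := by
  intro x₁ x₂
  have hS := measureReal_lt_max_and_lt_max hm₁ hm₂ hm₃ hindep x₁ x₂
  simp only [measureReal_def, hcdf₁, hcdf₂, hcdf₃] at hS
  have hadd : ∀ (β γ : ℝ) (x : ℕ),
      (1 - p ^ (((x : ℝ) + 1) ^ α)) ^ (β + γ) = edwCDF α p β x * edwCDF α p γ x :=
    edwCDF_add hp0.le hp1
  refine ⟨fun h ↦ ?_, fun h ↦ ?_, fun h ↦ ?_⟩
  · rw [hS, min_eq_left h.le, hadd, hadd]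
    unfold edwCDF
    ring
  · rw [hS, min_eq_right h.le, hadd, hadd]
    unfold edwCDF
    ring
  · subst h
    rw [hS, min_self, hadd]
    unfold edwCDF
    ring

/-- The joint reliability (survival) function of the BDEW distribution. -/
theorem bdew_joint_reliability
    {Ω : Type*} [MeasurableSpace Ω] (μ : Measure Ω) [IsProbabilityMeasure μ]
    (α p β₁ β₂ β₃ : ℝ)
    (hp0 : 0 < p) (hp1 : p < 1) (hα : 0 < α)
    (hβ₁ : 0 < β₁) (hβ₂ : 0 < β₂) (hβ₃ : 0 < β₃)
    (V₁ V₂ V₃ : Ω → ℕ)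
    (hm₁ : Measurable V₁) (hm₂ : Measurable V₂) (hm₃ : Measurable V₃)
    (hindep : iIndepFun ![V₁, V₂, V₃] μ)
    (hcdf₁ : ∀ x : ℕ, (μ {ω | V₁ ω ≤ x}).toReal = edwCDF α p β₁ x)
    (hcdf₂ : ∀ x : ℕ, (μ {ω | V₂ ω ≤ x}).toReal = edwCDF α p β₂ x)
    (hcdf₃ : ∀ x : ℕ, (μ {ω | V₃ ω ≤ x}).toReal = edwCDF α p β₃ x) :
    ∀ x₁ x₂ : ℕ,
      (x₁ < x₂ →
        (μ {ω | x₁ < max (V₁ ω) (V₃ ω) ∧ x₂ < max (V₂ ω) (V₃ ω)}).toReal =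
          1 - (1 - p ^ (((x₂ : ℝ) + 1) ^ α)) ^ (β₂ + β₃) -
            (1 - p ^ (((x₁ : ℝ) + 1) ^ α)) ^ (β₁ + β₃) *
              (1 - (1 - p ^ (((x₂ : ℝ) + 1) ^ α)) ^ β₂)) ∧
      (x₂ < x₁ →
        (μ {ω | x₁ < max (V₁ ω) (V₃ ω) ∧ x₂ < max (V₂ ω) (V₃ ω)}).toReal =
          1 - (1 - p ^ (((x₁ : ℝ) + 1) ^ α)) ^ (β₁ + β₃) -
            (1 - p ^ (((x₂ : ℝ) + 1) ^ α)) ^ (β₂ + β₃) *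
              (1 - (1 - p ^ (((x₁ : ℝ) + 1) ^ α)) ^ β₁)) ∧
      (x₁ = x₂ →
        (μ {ω | x₁ < max (V₁ ω) (V₃ ω) ∧ x₂ < max (V₂ ω) (V₃ ω)}).toReal =
          1 - (1 - p ^ (((x₁ : ℝ) + 1) ^ α)) ^ β₃ *
            ((1 - p ^ (((x₁ : ℝ) + 1) ^ α)) ^ β₁ + (1 - p ^ (((x₁ : ℝ) + 1) ^ α)) ^ β₂ -
              (1 - p ^ (((x₁ : ℝ) + 1) ^ α)) ^ (β₁ + β₂))) :=
  bdew_joint_reliability_general μ α p β₁ β₂ β₃ hp0 hp1 V₁ V₂ V₃ hm₁ hm₂ hm₃ hindep hcdf₁ hcdf₂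
    hcdf₃
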